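/- For fixed x > 0, the Box-Cox transform λ ↦ (x^λ - 1)/λ (extended by log x at λ = 0) is monotone nondecreasing in λ on ℝ. -/
import Mathlib


open Real

private lemma key_ineq (s : ℝ) : 0 ≤ Real.exp s * (s - 1) + 1 := by
  rcases le_or_gt 1 s with h | h
  · have := Real.exp_pos s
    nlinarith
  · have h1 : -s + 1 ≤ Real.exp (-s) := Real.add_one_le_exp (-s)
    have h2 : Real.exp s * (1 - s) ≤ Real.exp s * Real.exp (-s) := by
      apply mul_le_mul_of_nonneg_left (by linarith) (Real.exp_pos s).le
    rw [← Real.exp_add] at h2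
    simp at h2
    nlinarith

private lemma boxcox_hasDerivAt (x : ℝ) (hx : 0 < x) {l : ℝ} (hl : l ≠ 0) :
    HasDerivAt (fun lam : ℝ => (x ^ lam - 1) / lam)
      (((x ^ l * Real.log x) * l - (x ^ l - 1) * 1) / l ^ 2) l := by
  exact HasDerivAt.div
    (((hasStrictDerivAt_const_rpow hx l).hasDerivAt).sub_const 1)
    (hasDerivAt_id l) hl

private lemma boxcox_deriv_nonneg (x : ℝ) (hx : 0 < x) {l : ℝ} (hl : l ≠ 0) :
    0 ≤ deriv (fun lam : ℝ => (x ^ lam - 1) / lam) l := by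
  rw [(boxcox_hasDerivAt x hx hl).deriv]
  apply div_nonneg _ (sq_nonneg l)
  have hxl : x ^ l = Real.exp (Real.log x * l) := Real.rpow_def_of_pos hx l
  have := key_ineq (Real.log x * l)
  rw [hxl]
  nlinarith [this]

private lemma boxcox_mono_on (x : ℝ) (hx : 0 < x) (s : Set ℝ)
    (hs : Convex ℝ s) (hs0 : (0:ℝ) ∉ s) (hsi : interior s ⊆ s) :
    MonotoneOn (fun lam : ℝ => (x ^ lam - 1) / lam) s := by
  have hdiff : DifferentiableOn ℝ (fun lam : ℝ => (x ^ lam - 1) / lam) s := by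
    intro l hl
    exact (boxcox_hasDerivAt x hx (fun h => hs0 (h ▸ hl))).differentiableAt.differentiableWithinAt
  exact monotoneOn_of_deriv_nonneg hs hdiff.continuousOn
    (hdiff.mono hsi)
    (fun l hl => boxcox_deriv_nonneg x hx (fun h => hs0 (h ▸ hsi hl)))

theorem boxcox_monotone (x : ℝ) (hx : 0 < x) :
    Monotone (fun lam : ℝ => if lam = 0 then Real.log x else (x ^ lam - 1) / lam) := by
  have hpos : ∀ b : ℝ, 0 < b → Real.log x ≤ (x ^ b - 1) / b := by
    intro b hb
    rw [le_div_iff₀ hb]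
    have := Real.add_one_le_exp (Real.log x * b)
    rw [← Real.rpow_def_of_pos hx b] at this
    linarith
  have hneg : ∀ a : ℝ, a < 0 → (x ^ a - 1) / a ≤ Real.log x := by
    intro a ha
    rw [div_le_iff_of_neg ha]
    have := Real.add_one_le_exp (Real.log x * a)
    rw [← Real.rpow_def_of_pos hx a] at this
    linarith
  have hIoi := boxcox_mono_on x hx (Set.Ioi 0) (convex_Ioi 0)
    (by simp) interior_subset
  have hIio := boxcox_mono_on x hx (Set.Iio 0) (convex_Iio 0)
    (by simp) interior_subset
  intro a b hab
  rcases lt_trichotomy a 0 with ha | ha | ha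
  · rcases lt_trichotomy b 0 with hb | hb | hb
    · simp only [ha.ne, hb.ne, if_false]
      exact hIio ha hb hab
    · simp only [ha.ne, hb, if_false, if_true]
      exact hneg a ha
    · simp only [ha.ne, hb.ne', if_false]
      exact le_trans (hneg a ha) (hpos b hb)
  · subst ha
    rcases eq_or_lt_of_le hab with rfl | hb
    · exact le_refl _
    · simp only [hb.ne', if_false, if_true]
      exact hpos b hb
  · have hb : 0 < b := lt_of_lt_of_le ha hab
    simp only [ha.ne', hb.ne', if_false]
    exact hIoi ha hb hab
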